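/- arXiv:1108.1170 — 8 statements merged into one kernel-verified Lean document; each statement's English description precedes it below -/
import Mathlib

section
/- Let D ⊆ ℝⁿ be compact convex and f twice continuously differentiable and convex on D. Then the curvature constant C_f := sup over x, s ∈ D, α ∈ [0,1], y = x + α(s - x) of (1/α²)(f(y) - f(x) - ⟨y - x, ∇f(x)⟩) satisfies C_f ≤ (1/2)·diam(D)² · sup_{z ∈ D} λ_max(∇²f(z)), where diam is the Euclidean diameter and λ_max denotes the largest eigenvalue. -/
/-!
Along a segment, `g t = f (x + t • v)` with `v = s - x` has `g'' t = D²f (x + t • v) v v`, which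
is at most `λ_max ‖v‖²` by the spectral theorem; the second-order Taylor bound therefore gives
`(f y - f x - ⟪y - x, ∇f x⟫) / α² ≤ λ_max ‖v‖² / 2 ≤ λ_max diam(D)² / 2`. The supremum of
`λ_max` over `D` is finite since `λ_max z ≤ ‖D²f z‖`, and it is nonnegative by convexity. This
matters because `α = 0` puts the junk value `1 / 0 * _ = 0` into the set.
-/

open Set Matrix

theorem OrthonormalBasis.inner_map_self_le {ι E : Type*} [Fintype ι] [NormedAddCommGroup E]
    [InnerProductSpace ℝ E] (b : OrthonormalBasis ι ℝ E) {T : E →ₗ[ℝ] E} {μ : ι → ℝ}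
    (hT : ∀ i, T (b i) = μ i • b i) {c : ℝ} (hμ : ∀ i, μ i ≤ c) (v : E) :
    inner ℝ v (T v) ≤ c * ‖v‖ ^ 2 := by
  have hTv : T v = ∑ i, (inner ℝ (b i) v * μ i) • b i := by
    conv_lhs => rw [← b.sum_repr' v]
    simp [hT, smul_smul]
  calc inner ℝ v (T v) = ∑ i, μ i * inner ℝ (b i) v ^ 2 := by
        simp only [hTv, inner_sum, inner_smul_right, real_inner_comm v]
        exact Finset.sum_congr rfl fun i _ => by ring
    _ ≤ ∑ i, c * inner ℝ (b i) v ^ 2 := by gcongr with i; exact hμ i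
    _ = c * ‖v‖ ^ 2 := by
        rw [← Finset.mul_sum, ← b.sum_sq_norm_inner_right]
        simp only [Real.norm_eq_abs, sq_abs]

theorem ContinuousLinearMap.apply_apply_eq_dotProduct_mulVec {ι 𝕜 : Type*} [Fintype ι]
    [DecidableEq ι] [RCLike 𝕜] (B : EuclideanSpace 𝕜 ι →L[𝕜] EuclideanSpace 𝕜 ι →L[𝕜] 𝕜)
    (x y : EuclideanSpace 𝕜 ι) :
    B x y = x.ofLp ⬝ᵥ (of fun i j => B (EuclideanSpace.single i 1)
      (EuclideanSpace.single j 1)) *ᵥ y.ofLp := by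
  let b := (EuclideanSpace.basisFun ι 𝕜).toBasis
  have hM : LinearMap.toMatrix₂ b b B.toLinearMap₁₂ =
      of fun i j => B (EuclideanSpace.single i 1) (EuclideanSpace.single j 1) := by
    ext i j
    simp [b, LinearMap.toMatrix₂_apply]
  have := apply_eq_dotProduct_toMatrix₂_mulVec b b B.toLinearMap₁₂ x y
  rw [hM, RingHom.coe_id, Function.id_comp, Function.id_comp] at this
  exact this

namespace Matrix.IsHermitian

variable {ι : Type*} [Fintype ι] [DecidableEq ι] {A : Matrix ι ι ℝ}

theorem dotProduct_mulVec_le_iSup_eigenvalues_mul (hA : A.IsHermitian) (v : EuclideanSpace ℝ ι) :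
    v.ofLp ⬝ᵥ A *ᵥ v.ofLp ≤ (⨆ i, hA.eigenvalues i) * ‖v‖ ^ 2 := by
  have hT : ∀ i, toLpLin 2 2 A (hA.eigenvectorBasis i) =
      hA.eigenvalues i • hA.eigenvectorBasis i := fun i => by
    ext1
    simp [toLpLin_apply, hA.mulVec_eigenvectorBasis]
  rw [dotProduct_comm]
  exact hA.eigenvectorBasis.inner_map_self_le hT
    (fun i => le_ciSup (Set.finite_range _).bddAbove i) v

theorem iSup_eigenvalues_le_opNorm (hA : A.IsHermitian)
    {B : EuclideanSpace ℝ ι →L[ℝ] EuclideanSpace ℝ ι →L[ℝ] ℝ}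
    (hAB : ∀ x y, B x y = x.ofLp ⬝ᵥ A *ᵥ y.ofLp) :
    ⨆ i, hA.eigenvalues i ≤ ‖B‖ := by
  refine Real.iSup_le (fun i => ?_) (norm_nonneg B)
  set b := hA.eigenvectorBasis
  calc hA.eigenvalues i = B (b i) (b i) := by simpa [hAB] using hA.eigenvalues_eq i
    _ ≤ ‖B‖ * ‖b i‖ * ‖b i‖ := (le_abs_self _).trans (B.le_opNorm₂ _ _)
    _ = ‖B‖ := by simp [b.orthonormal.1 i]

end Matrix.IsHermitian

theorem IsCompact.bddAbove_image_iSup_eigenvalues {X ι : Type*} [TopologicalSpace X] [Fintype ι]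
    [DecidableEq ι] {K : Set X} (hK : IsCompact K)
    {B : X → EuclideanSpace ℝ ι →L[ℝ] EuclideanSpace ℝ ι →L[ℝ] ℝ} (hB : Continuous B)
    {A : X → Matrix ι ι ℝ} (hA : ∀ z, (A z).IsHermitian)
    (hAB : ∀ z x y, B z x y = x.ofLp ⬝ᵥ A z *ᵥ y.ofLp) :
    BddAbove ((fun z => ⨆ i, (hA z).eigenvalues i) '' K) := by
  obtain ⟨C, hC⟩ := hK.bddAbove_image
    (hB.norm (E := EuclideanSpace ℝ ι →L[ℝ] EuclideanSpace ℝ ι →L[ℝ] ℝ)).continuousOn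
  refine ⟨C, ?_⟩
  rintro _ ⟨z, hz, rfl⟩
  exact ((hA z).iSup_eigenvalues_le_opNorm (hAB z)).trans (hC (mem_image_of_mem _ hz))

theorem sub_sub_mul_le_of_hasDerivAt_of_le {g g' g'' : ℝ → ℝ} {a b M : ℝ} (hab : a ≤ b)
    (hg : ∀ t, HasDerivAt g (g' t) t) (hg' : ∀ t, HasDerivAt g' (g'' t) t)
    (hM : ∀ t ∈ Icc a b, g'' t ≤ M) :
    g b - g a - (b - a) * g' a ≤ M * (b - a) ^ 2 / 2 := by
  have hslope : AntitoneOn (fun t => g' t - M * t) (Icc a b) := by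
    have hd : ∀ t, HasDerivAt (fun t => g' t - M * t) (g'' t - M) t := fun t => by
      simpa using (hg' t).fun_sub ((hasDerivAt_id' t).const_mul M)
    refine antitoneOn_of_hasDerivWithinAt_nonpos (convex_Icc a b)
      (fun t _ => (hd t).continuousAt.continuousWithinAt) (fun t _ => (hd t).hasDerivWithinAt) ?_
    intro t ht
    rw [interior_Icc] at ht
    linarith [hM t (Ioo_subset_Icc_self ht)]
  have hval : AntitoneOn (fun t => g t - t * g' a - M * (t - a) ^ 2 / 2) (Icc a b) := by
    have hd : ∀ t, HasDerivAt (fun t => g t - t * g' a - M * (t - a) ^ 2 / 2)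
        (g' t - g' a - M * (t - a)) t := fun t => by
      refine (((hg t).fun_sub ((hasDerivAt_id' t).mul_const (g' a))).fun_sub
        ((((hasDerivAt_id' t).sub_const a).fun_pow 2).const_mul M |>.div_const 2)).congr_deriv ?_
      norm_num
      ring
    refine antitoneOn_of_hasDerivWithinAt_nonpos (convex_Icc a b)
      (fun t _ => (hd t).continuousAt.continuousWithinAt) (fun t _ => (hd t).hasDerivWithinAt) ?_
    intro t ht
    rw [interior_Icc] at ht
    have := hslope (left_mem_Icc.2 hab) (Ioo_subset_Icc_self ht) ht.1.le
    dsimp only at this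
    linarith
  have := hval (left_mem_Icc.2 hab) (right_mem_Icc.2 hab) hab
  dsimp only at this
  linarith

theorem DifferentiableAt.hasDerivAt_comp_add_smul {E F : Type*} [NormedAddCommGroup E]
    [NormedSpace ℝ E] [NormedAddCommGroup F] [NormedSpace ℝ F] {g : E → F} {x v : E} {t : ℝ}
    (hg : DifferentiableAt ℝ g (x + t • v)) :
    HasDerivAt (fun s : ℝ => g (x + s • v)) (fderiv ℝ g (x + t • v) v) t := by
  have hline : HasDerivAt (fun s : ℝ => x + s • v) v t := by
    simpa using ((hasDerivAt_id t).smul_const v).const_add x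
  exact hg.hasFDerivAt.comp_hasDerivAt t hline

section SecondOrder

variable {E : Type*} [NormedAddCommGroup E] [NormedSpace ℝ E] {f : E → ℝ}

theorem ContDiff.hasDerivAt_comp_add_smul {n : WithTop ℕ∞} (hf : ContDiff ℝ n f) (hn : n ≠ 0)
    (x v : E) (t : ℝ) :
    HasDerivAt (fun s : ℝ => f (x + s • v)) (fderiv ℝ f (x + t • v) v) t :=
  (hf.differentiable hn).differentiableAt.hasDerivAt_comp_add_smul

theorem ContDiff.hasDerivAt_fderiv_comp_add_smul {n : WithTop ℕ∞} (hf : ContDiff ℝ n f)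
    (hn : 2 ≤ n) (x v : E) (t : ℝ) :
    HasDerivAt (fun s : ℝ => fderiv ℝ f (x + s • v) v)
      (fderiv ℝ (fderiv ℝ f) (x + t • v) v v) t := by
  have hf' : Differentiable ℝ (fderiv ℝ f) :=
    (hf.fderiv_right (m := 1) hn).differentiable one_ne_zero
  simpa using hf'.differentiableAt.hasDerivAt_comp_add_smul.clm_apply (hasDerivAt_const t v)

theorem ContDiff.sub_sub_fderiv_le (hf : ContDiff ℝ 2 f) {x v : E} {α M : ℝ} (hα : 0 ≤ α)
    (hM : ∀ t ∈ Icc 0 α, fderiv ℝ (fderiv ℝ f) (x + t • v) v v ≤ M) :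
    f (x + α • v) - f x - α * fderiv ℝ f x v ≤ M * α ^ 2 / 2 := by
  simpa using sub_sub_mul_le_of_hasDerivAt_of_le hα (hf.hasDerivAt_comp_add_smul two_ne_zero x v)
    (hf.hasDerivAt_fderiv_comp_add_smul le_rfl x v) hM

theorem ConvexOn.fderiv_fderiv_apply_nonneg {D : Set E} (hconv : ConvexOn ℝ D f)
    (hf : ContDiff ℝ 2 f) {x s : E} (hx : x ∈ D) (hs : s ∈ D) {t : ℝ} (ht : t ∈ Ioo 0 1) :
    0 ≤ fderiv ℝ (fderiv ℝ f) (x + t • (s - x)) (s - x) (s - x) := by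
  have hline : ∀ t : ℝ, AffineMap.lineMap x s t = x + t • (s - x) := fun t => by
    rw [AffineMap.lineMap_apply_module', add_comm]
  have hsegment : ConvexOn ℝ (Icc 0 1) fun t : ℝ => f (x + t • (s - x)) := by
    refine ((hconv.comp_affineMap (AffineMap.lineMap x s)).subset ?_ (convex_Icc 0 1)).congr ?_
    · exact fun t ht => by simpa [hline] using hconv.1.add_smul_sub_mem hx hs ht
    · exact fun t _ => by simp [hline]
  have hderiv : deriv (fun t : ℝ => f (x + t • (s - x))) =
      fun t => fderiv ℝ f (x + t • (s - x)) (s - x) :=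
    funext fun t => (hf.hasDerivAt_comp_add_smul two_ne_zero x (s - x) t).deriv
  have hmono := hsegment.monotoneOn_deriv fun t _ =>
    (hf.hasDerivAt_comp_add_smul two_ne_zero x (s - x) t).differentiableAt
  rw [hderiv] at hmono
  have := hmono.derivWithin_nonneg (x := t)
  rwa [derivWithin_of_mem_nhds (Icc_mem_nhds ht.1 ht.2),
    (hf.hasDerivAt_fderiv_comp_add_smul le_rfl x (s - x) t).deriv] at this

theorem ConvexOn.nonneg_of_fderiv_fderiv_le {D : Set E} (hconv : ConvexOn ℝ D f)
    (hf : ContDiff ℝ 2 f) {c : E → ℝ} (hc : ∀ z v, fderiv ℝ (fderiv ℝ f) z v v ≤ c z * ‖v‖ ^ 2)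
    {x s : E} (hx : x ∈ D) (hs : s ∈ D) (hxs : x ≠ s) : 0 ≤ c (x + (2⁻¹ : ℝ) • (s - x)) := by
  have hpos := hconv.fderiv_fderiv_apply_nonneg hf hx hs (t := 2⁻¹) (by norm_num)
  have hnorm : 0 < ‖s - x‖ ^ 2 := by positivity [sub_ne_zero.2 hxs.symm]
  exact nonneg_of_mul_nonneg_left (hpos.trans (hc _ _)) hnorm

end SecondOrder

theorem one_div_sq_mul_sub_sub_inner_gradient_le {E : Type*} [NormedAddCommGroup E]
    [InnerProductSpace ℝ E] [CompleteSpace E] {f : E → ℝ} (hf : ContDiff ℝ 2 f) {x v : E}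
    {α M : ℝ} (hα : 0 < α) (hM : ∀ t ∈ Icc 0 α, fderiv ℝ (fderiv ℝ f) (x + t • v) v v ≤ M) :
    1 / α ^ 2 * (f (x + α • v) - f x - inner ℝ (x + α • v - x) (gradient f x)) ≤ M / 2 := by
  have hinner : inner ℝ (x + α • v - x) (gradient f x) = α * fderiv ℝ f x v := by
    simp [inner_gradient_right]
  rw [hinner, one_div_mul_eq_div, div_le_iff₀ (by positivity)]
  linarith [hf.sub_sub_fderiv_le hα.le hM]

open Matrix in
/-- The curvature constant `C_f` of a twice continuously differentiable convex function
over a compact convex domain `D ⊆ ℝⁿ` is at most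
`(1/2) · diam(D)² · sup_{z ∈ D} λ_max(∇²f(z))`. -/
theorem curvature_le_diam_sq_mul_sup_lambdaMax_hessian
    {n : ℕ} (D : Set (EuclideanSpace ℝ (Fin n)))
    (hDcomp : IsCompact D) (hDconv : Convex ℝ D)
    (f : EuclideanSpace ℝ (Fin n) → ℝ)
    (hf : ContDiff ℝ 2 f) (hconv : ConvexOn ℝ D f)
    (H : EuclideanSpace ℝ (Fin n) → Matrix (Fin n) (Fin n) ℝ)
    (hH : ∀ z, H z = Matrix.of fun i j =>
      iteratedFDeriv ℝ 2 f z ![EuclideanSpace.single i (1 : ℝ), EuclideanSpace.single j (1 : ℝ)])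
    (hHerm : ∀ z, (H z).IsHermitian) :
    sSup {r : ℝ | ∃ x ∈ D, ∃ s ∈ D, ∃ α ∈ Set.Icc (0 : ℝ) 1,
        r = (1 / α ^ 2) *
          (f (x + α • (s - x)) - f x - inner ℝ (x + α • (s - x) - x) (gradient f x))} ≤
      (1 / 2) * Metric.diam D ^ 2 * sSup ((fun z => ⨆ i, (hHerm z).eigenvalues i) '' D) := by
  rcases D.subsingleton_or_nontrivial with hD | ⟨x₀, hx₀, s₀, hs₀, hxs₀⟩
  · refine (Real.sSup_nonpos ?_).trans (by simp [Metric.diam_subsingleton hD])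
    rintro _ ⟨x, hx, s, hs, α, -, rfl⟩
    simp [hD hs hx]
  set S := sSup ((fun z => ⨆ i, (hHerm z).eigenvalues i) '' D)
  have hB : ∀ z x y, fderiv ℝ (fderiv ℝ f) z x y = x.ofLp ⬝ᵥ H z *ᵥ y.ofLp := fun z x y => by
    rw [ContinuousLinearMap.apply_apply_eq_dotProduct_mulVec, hH]
    simp [iteratedFDeriv_two_apply]
  have hquad z v : fderiv ℝ (fderiv ℝ f) z v v ≤ (⨆ i, (hHerm z).eigenvalues i) * ‖v‖ ^ 2 :=
    (hB z v v).trans_le ((hHerm z).dotProduct_mulVec_le_iSup_eigenvalues_mul v)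
  have hbdd := hDcomp.bddAbove_image_iSup_eigenvalues
    ((hf.fderiv_right (m := 1) le_rfl).continuous_fderiv one_ne_zero) hHerm hB
  have hle_S {x s t} (hx : x ∈ D) (hs : s ∈ D) (ht : t ∈ Icc (0 : ℝ) 1) :
      ⨆ i, (hHerm (x + t • (s - x))).eigenvalues i ≤ S :=
    le_csSup hbdd (mem_image_of_mem _ (hDconv.add_smul_sub_mem hx hs ht))
  have hS : 0 ≤ S := (hconv.nonneg_of_fderiv_fderiv_le hf hquad hx₀ hs₀ hxs₀).trans
    (hle_S hx₀ hs₀ (by norm_num))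
  refine Real.sSup_le ?_ (by positivity)
  rintro _ ⟨x, hx, s, hs, α, hα, rfl⟩
  rcases hα.1.eq_or_lt with rfl | hα0
  · rw [zero_pow two_ne_zero, div_zero, zero_mul]
    positivity
  calc _ ≤ S * ‖s - x‖ ^ 2 / 2 :=
        one_div_sq_mul_sub_sub_inner_gradient_le hf hα0 fun t ht => (hquad _ _).trans
          (by gcongr; exact hle_S hx hs ⟨ht.1, ht.2.trans hα.2⟩)
    _ ≤ S * Metric.diam D ^ 2 / 2 := by
        gcongr
        simpa [dist_eq_norm] using Metric.dist_le_diam_of_mem hDcomp.isBounded hs hx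
    _ = _ := by ring
end

section
/- Let D be compact convex, f convex differentiable with curvature constant C_f, and g(x) := max_{s ∈ D} ⟨x - s, ∇f(x)⟩ the duality gap. For any x ∈ D, step-size α ∈ [0,1], and s ∈ D achieving min_{y ∈ D} ⟨y, ∇f(x)⟩, the point y := x + α(s - x) satisfies f(y) ≤ f(x) - α·g(x) + α²·C_f. -/
/-!
Since `s` minimizes the linearization `⟨·, ∇f(x)⟩` over `D`, it also attains the duality gap,
so `g(x) = ⟨x - s, ∇f(x)⟩` and the first-order term of `f` along the step equals `-α g(x)`.
The remainder is bounded by `α² C_f` directly from the definition of the curvature constant.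
-/

open Set
open scoped RealInnerProductSpace Gradient

section
variable {X : Type*} [NormedAddCommGroup X] [InnerProductSpace ℝ X]

theorem sSup_image_inner_sub_eq_of_isMinOn {D : Set X} {v s : X} (x : X) (hs : s ∈ D)
    (hmin : IsMinOn (fun y => ⟪y, v⟫) D s) :
    sSup ((fun y => ⟪x - y, v⟫) '' D) = ⟪x - s, v⟫ := by
  refine IsGreatest.csSup_eq ⟨mem_image_of_mem _ hs, forall_mem_image.2 fun y hy => ?_⟩
  simpa only [inner_sub_left, sub_le_sub_iff_left] using isMinOn_iff.1 hmin y hy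

variable [CompleteSpace X]

/-- The set of rescaled linearization errors whose supremum is the curvature constant `C_f`. -/
noncomputable def curvatureSet (D : Set X) (f : X → ℝ) : Set ℝ :=
  {r | ∃ x ∈ D, ∃ s ∈ D, ∃ α ∈ Icc (0 : ℝ) 1,
    r = (1 / α ^ 2) * (f (x + α • (s - x)) - f x - ⟪x + α • (s - x) - x, ∇ f x⟫)}

theorem sub_sub_inner_le_sq_mul_sSup_curvatureSet {D : Set X} {f : X → ℝ} {x s : X} {α : ℝ}
    (hbdd : BddAbove (curvatureSet D f)) (hx : x ∈ D) (hs : s ∈ D) (hα : α ∈ Icc (0 : ℝ) 1) :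
    f (x + α • (s - x)) - f x - α * ⟪s - x, ∇ f x⟫ ≤ α ^ 2 * sSup (curvatureSet D f) := by
  rcases hα.1.eq_or_lt with rfl | hαpos
  · simp
  have hquot := le_csSup hbdd ⟨x, hx, s, hs, α, hα, rfl⟩
  rw [add_sub_cancel_left, real_inner_smul_left, one_div_mul_eq_div] at hquot
  exact (div_le_iff₀' (by positivity)).1 hquot

end

theorem step_improvement_exact_linear_minimizer_general
    {X : Type*} [NormedAddCommGroup X] [InnerProductSpace ℝ X] [CompleteSpace X]
    (D : Set X)
    (f : X → ℝ)
    (Cf : ℝ)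
    (hCf : Cf = sSup {r : ℝ | ∃ x ∈ D, ∃ s ∈ D, ∃ α ∈ Set.Icc (0 : ℝ) 1,
        r = (1 / α ^ 2) *
          (f (x + α • (s - x)) - f x - inner ℝ (x + α • (s - x) - x) (gradient f x))})
    (hbdd : BddAbove {r : ℝ | ∃ x ∈ D, ∃ s ∈ D, ∃ α ∈ Set.Icc (0 : ℝ) 1,
        r = (1 / α ^ 2) *
          (f (x + α • (s - x)) - f x - inner ℝ (x + α • (s - x) - x) (gradient f x))})
    (g : X → ℝ)
    (hg : ∀ x, g x = sSup ((fun s => (inner ℝ (x - s) (gradient f x) : ℝ)) '' D))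
    (x : X) (hx : x ∈ D) (α : ℝ) (hα : α ∈ Set.Icc (0 : ℝ) 1)
    (s : X) (hs : s ∈ D)
    (hmin : ∀ y ∈ D, (inner ℝ s (gradient f x) : ℝ) ≤ inner ℝ y (gradient f x)) :
    f (x + α • (s - x)) ≤ f x - α * g x + α ^ 2 * Cf := by
  have hgap : g x = ⟪x - s, ∇ f x⟫ :=
    (hg x).trans (sSup_image_inner_sub_eq_of_isMinOn x hs (isMinOn_iff.2 hmin))
  have hcurv : f (x + α • (s - x)) - f x - α * ⟪s - x, ∇ f x⟫ ≤ α ^ 2 * Cf :=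
    hCf ▸ sub_sub_inner_le_sq_mul_sSup_curvatureSet hbdd hx hs hα
  rw [hgap, ← neg_sub s x, inner_neg_left]
  linarith

/-- Step improvement with exact linear minimization: for convex differentiable `f`
with curvature constant `Cf` over the compact convex set `D`, duality gap
`g(x) = max_{s ∈ D} ⟨x - s, ∇f(x)⟩`, any `x ∈ D`, step size `α ∈ [0,1]`, and
`s ∈ D` minimizing the linearization `y ↦ ⟨y, ∇f(x)⟩` over `D`, the point
`y = x + α(s - x)` satisfies `f(y) ≤ f(x) - α g(x) + α² Cf`. -/
theorem step_improvement_exact_linear_minimizer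
    {X : Type*} [NormedAddCommGroup X] [InnerProductSpace ℝ X] [CompleteSpace X]
    (D : Set X) (hDcomp : IsCompact D) (hDconv : Convex ℝ D)
    (f : X → ℝ) (hdiff : Differentiable ℝ f) (hconv : ConvexOn ℝ D f)
    (Cf : ℝ)
    (hCf : Cf = sSup {r : ℝ | ∃ x ∈ D, ∃ s ∈ D, ∃ α ∈ Set.Icc (0 : ℝ) 1,
        r = (1 / α ^ 2) *
          (f (x + α • (s - x)) - f x - inner ℝ (x + α • (s - x) - x) (gradient f x))})
    (hbdd : BddAbove {r : ℝ | ∃ x ∈ D, ∃ s ∈ D, ∃ α ∈ Set.Icc (0 : ℝ) 1,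
        r = (1 / α ^ 2) *
          (f (x + α • (s - x)) - f x - inner ℝ (x + α • (s - x) - x) (gradient f x))})
    (g : X → ℝ)
    (hg : ∀ x, g x = sSup ((fun s => (inner ℝ (x - s) (gradient f x) : ℝ)) '' D))
    (x : X) (hx : x ∈ D) (α : ℝ) (hα : α ∈ Set.Icc (0 : ℝ) 1)
    (s : X) (hs : s ∈ D)
    (hmin : ∀ y ∈ D, (inner ℝ s (gradient f x) : ℝ) ≤ inner ℝ y (gradient f x)) :
    f (x + α • (s - x)) ≤ f x - α * g x + α ^ 2 * Cf :=
  step_improvement_exact_linear_minimizer_general D f Cf hCf hbdd g hg x hx α hα s hs hmin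
end

section
/- Let D be compact convex, f convex differentiable with curvature constant C_f, and g(x) := max_{s ∈ D} ⟨x - s, ∇f(x)⟩. Let x ∈ D, α ∈ (0,1], and let s ∈ D satisfy ⟨s, ∇f(x)⟩ ≤ min_{y ∈ D} ⟨y, ∇f(x)⟩ + α·C_f. Then f(x + α(s - x)) ≤ f(x) - α·g(x) + 2α²·C_f. -/
open scoped RealInnerProductSpace

/-!
The curvature constant bounds the error of the first-order model along the segment from `x`
towards `s`: `f (x + α (s - x)) ≤ f x + α ⟪s - x, ∇f x⟫ + α² C_f`. Since `D` is compact, the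
gap is `g x = ⟪x, ∇f x⟫ - min_{y ∈ D} ⟪y, ∇f x⟫`, so the approximate minimality of `s` gives
`⟪s - x, ∇f x⟫ ≤ -g x + α C_f`, and the two bounds combine.
-/

theorem sSup_image_const_sub {ι : Type*} {S : Set ι} (hS : S.Nonempty) {φ : ι → ℝ}
    (hφ : BddBelow (φ '' S)) (c : ℝ) :
    sSup ((fun i => c - φ i) '' S) = c - sInf (φ '' S) := by
  rw [Antitone.map_csInf_of_continuousAt (continuous_sub_left c).continuousAt
    (fun _ _ h => sub_le_sub_left h c) (hS.image φ) hφ, Set.image_image]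

section InnerProductSpace

variable {X : Type*} [NormedAddCommGroup X] [InnerProductSpace ℝ X]

theorem IsCompact.sSup_image_inner_sub {D : Set X} (hD : IsCompact D) (hne : D.Nonempty)
    (x v : X) :
    sSup ((fun s => ⟪x - s, v⟫) '' D) = ⟪x, v⟫ - sInf ((fun y => ⟪y, v⟫) '' D) := by
  simp_rw [inner_sub_left]
  exact sSup_image_const_sub hne (hD.image (continuous_id.inner continuous_const)).bddBelow _

variable [CompleteSpace X]

/-- The quotients whose supremum is the curvature constant `C_f` of `f` over `D`. -/
def curvatureQuotients (f : X → ℝ) (D : Set X) : Set ℝ :=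
  {r | ∃ x ∈ D, ∃ s ∈ D, ∃ α ∈ Set.Icc (0 : ℝ) 1,
    r = (1 / α ^ 2) * (f (x + α • (s - x)) - f x - ⟪x + α • (s - x) - x, gradient f x⟫)}

theorem apply_add_smul_sub_le_of_curvature {f : X → ℝ} {D : Set X}
    (hbdd : BddAbove (curvatureQuotients f D)) {x s : X} (hx : x ∈ D) (hs : s ∈ D) {α : ℝ}
    (hα : α ∈ Set.Ioc (0 : ℝ) 1) :
    f (x + α • (s - x)) ≤
      f x + α * ⟪s - x, gradient f x⟫ + α ^ 2 * sSup (curvatureQuotients f D) := by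
  have hquot := le_csSup hbdd ⟨x, hx, s, hs, α, Set.Ioc_subset_Icc_self hα, rfl⟩
  rw [add_sub_cancel_left, real_inner_smul_left, one_div, inv_mul_le_iff₀ (pow_pos hα.1 2)]
    at hquot
  linarith

end InnerProductSpace

theorem step_improvement_approx_linear_minimizer_general
    {X : Type*} [NormedAddCommGroup X] [InnerProductSpace ℝ X] [CompleteSpace X]
    (D : Set X) (hDcomp : IsCompact D)
    (f : X → ℝ)
    (Cf : ℝ)
    (hCf : Cf = sSup {r : ℝ | ∃ x ∈ D, ∃ s ∈ D, ∃ α ∈ Set.Icc (0 : ℝ) 1,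
        r = (1 / α ^ 2) *
          (f (x + α • (s - x)) - f x - inner ℝ (x + α • (s - x) - x) (gradient f x))})
    (hbdd : BddAbove {r : ℝ | ∃ x ∈ D, ∃ s ∈ D, ∃ α ∈ Set.Icc (0 : ℝ) 1,
        r = (1 / α ^ 2) *
          (f (x + α • (s - x)) - f x - inner ℝ (x + α • (s - x) - x) (gradient f x))})
    (g : X → ℝ)
    (hg : ∀ x, g x = sSup ((fun s => (inner ℝ (x - s) (gradient f x) : ℝ)) '' D))
    (x : X) (hx : x ∈ D) (α : ℝ) (hα : α ∈ Set.Ioc (0 : ℝ) 1)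
    (s : X) (hs : s ∈ D)
    (happrox : (inner ℝ s (gradient f x) : ℝ) ≤
      sInf ((fun y => (inner ℝ y (gradient f x) : ℝ)) '' D) + α * Cf) :
    f (x + α • (s - x)) ≤ f x - α * g x + 2 * α ^ 2 * Cf := by
  have hstep := apply_add_smul_sub_le_of_curvature (f := f) hbdd hx hs hα
  rw [curvatureQuotients, ← hCf, inner_sub_left] at hstep
  have hgap : g x = ⟪x, gradient f x⟫ - sInf ((fun y => ⟪y, gradient f x⟫) '' D) :=
    (hg x).trans (hDcomp.sSup_image_inner_sub ⟨x, hx⟩ x _)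
  have hscaled := mul_le_mul_of_nonneg_left happrox hα.1.le
  linear_combination hstep + hscaled + α * hgap

/-- Step improvement with approximate linear minimization: for convex differentiable
`f` with curvature constant `Cf` over the compact convex set `D`, duality gap
`g(x) = max_{s ∈ D} ⟨x - s, ∇f(x)⟩`, `x ∈ D`, step size `α ∈ (0,1]`, and `s ∈ D`
an `α·Cf`-approximate minimizer of the linearization over `D`, we have
`f(x + α(s - x)) ≤ f(x) - α g(x) + 2 α² Cf`. -/
theorem step_improvement_approx_linear_minimizer
    {X : Type*} [NormedAddCommGroup X] [InnerProductSpace ℝ X] [CompleteSpace X]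
    (D : Set X) (hDcomp : IsCompact D) (hDconv : Convex ℝ D)
    (f : X → ℝ) (hdiff : Differentiable ℝ f) (hconv : ConvexOn ℝ D f)
    (Cf : ℝ)
    (hCf : Cf = sSup {r : ℝ | ∃ x ∈ D, ∃ s ∈ D, ∃ α ∈ Set.Icc (0 : ℝ) 1,
        r = (1 / α ^ 2) *
          (f (x + α • (s - x)) - f x - inner ℝ (x + α • (s - x) - x) (gradient f x))})
    (hbdd : BddAbove {r : ℝ | ∃ x ∈ D, ∃ s ∈ D, ∃ α ∈ Set.Icc (0 : ℝ) 1,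
        r = (1 / α ^ 2) *
          (f (x + α • (s - x)) - f x - inner ℝ (x + α • (s - x) - x) (gradient f x))})
    (g : X → ℝ)
    (hg : ∀ x, g x = sSup ((fun s => (inner ℝ (x - s) (gradient f x) : ℝ)) '' D))
    (x : X) (hx : x ∈ D) (α : ℝ) (hα : α ∈ Set.Ioc (0 : ℝ) 1)
    (s : X) (hs : s ∈ D)
    (happrox : (inner ℝ s (gradient f x) : ℝ) ≤
      sInf ((fun y => (inner ℝ y (gradient f x) : ℝ)) '' D) + α * Cf) :
    f (x + α • (s - x)) ≤ f x - α * g x + 2 * α ^ 2 * Cf :=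
  step_improvement_approx_linear_minimizer_general D hDcomp f Cf hCf hbdd g hg x hx α hα s hs
    happrox
end

section
/- Let h : ℕ → ℝ satisfy h(k) ≥ 0 for all k, h(k+1) ≤ (1 - 2/(k+2))·h(k) + (2/(k+2))²·C for all k ≥ 0, for some constant C > 0. Then h(k) ≤ 4C/(k+2) for all k ≥ 1. -/
/-- The Frank–Wolfe recursion: if `h k ≥ 0` and
`h (k+1) ≤ (1 - 2/(k+2)) h k + (2/(k+2))² C` for all `k`, with `C > 0`,
then `h k ≤ 4 C / (k+2)` for all `k ≥ 1`. -/
theorem frank_wolfe_recursion_bound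
    (h : ℕ → ℝ) (C : ℝ) (hC : 0 < C)
    (hnonneg : ∀ k, 0 ≤ h k)
    (hrec : ∀ k : ℕ, h (k + 1) ≤
      (1 - 2 / ((k : ℝ) + 2)) * h k + (2 / ((k : ℝ) + 2)) ^ 2 * C) :
    ∀ k : ℕ, 1 ≤ k → h k ≤ 4 * C / ((k : ℝ) + 2) := by
  intro k hk
  induction k with
  | zero => omega
  | succ n ih =>
    rcases Nat.eq_zero_or_pos n with hn | hn
    · subst hn
      have := hrec 0
      push_cast at this ⊢
      nlinarith [hnonneg 0]
    · have ihn := ih hn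
      have hrecn := hrec n
      have hn2 : (0:ℝ) < (n:ℝ) + 2 := by positivity
      have hcoef : (0:ℝ) ≤ 1 - 2 / ((n:ℝ) + 2) := by
        rw [sub_nonneg, div_le_one hn2]
        norm_num
      have step : h (n + 1) ≤ (1 - 2 / ((n:ℝ) + 2)) * (4 * C / ((n:ℝ) + 2))
          + (2 / ((n:ℝ) + 2)) ^ 2 * C := by
        calc h (n + 1) ≤ (1 - 2 / ((n:ℝ) + 2)) * h n + (2 / ((n:ℝ) + 2)) ^ 2 * C := hrecn
        _ ≤ _ := by nlinarith [mul_le_mul_of_nonneg_left ihn hcoef]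
      have key : (1 - 2 / ((n:ℝ) + 2)) * (4 * C / ((n:ℝ) + 2))
          + (2 / ((n:ℝ) + 2)) ^ 2 * C ≤ 4 * C / ((n:ℝ) + 3) := by
        have expand : (1 - 2 / ((n:ℝ) + 2)) * (4 * C / ((n:ℝ) + 2)) + (2 / ((n:ℝ) + 2)) ^ 2 * C
            = 4 * C * ((n:ℝ)+1) / ((n:ℝ)+2)^2 := by
          field_simp
          ring
        rw [expand, div_le_div_iff₀ (by positivity) (by positivity)]
        nlinarith [hC]
      push_cast
      calc h (n + 1) ≤ _ := step
      _ ≤ 4 * C / ((n:ℝ) + 3) := key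
      _ = 4 * C / ((n:ℝ) + 1 + 2) := by ring_nf
end

section
/- For f(x) := ‖x‖₂² over the unit simplex Δₙ ⊂ ℝⁿ, the duality gap g(x) := ⟨x, ∇f(x)⟩ - minᵢ (∇f(x))ᵢ satisfies g(x) ≥ 2/k for every x ∈ Δₙ with at most k non-zero coordinates, whenever k < n. -/
/-- For `f(x) = ‖x‖₂²` over the unit simplex (`∇f(x) = 2x`), the duality gap
`g(x) = ⟨x, ∇f(x)⟩ - minᵢ (∇f(x))ᵢ` is at least `2/k` for every `x ∈ Δₙ` with at
most `k < n` non-zero coordinates. -/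
theorem duality_gap_lower_bound_sparse_simplex
    (n k : ℕ) (hkn : k < n) (x : EuclideanSpace ℝ (Fin n))
    (hpos : ∀ i, 0 ≤ x i) (hsum : ∑ i, x i = 1)
    (hcard : {i : Fin n | x i ≠ 0}.ncard ≤ k) :
    (∑ i, x i * (2 * x i)) - (⨅ i, 2 * x i) ≥ 2 / (k : ℝ) := by
  set S : Finset (Fin n) := Finset.univ.filter (fun i => x i ≠ 0) with hS
  have hset : {i : Fin n | x i ≠ 0} = ↑S := by
    ext i; simp [hS]
  have hScard : S.card ≤ k := by
    have := hcard
    rwa [hset, Set.ncard_coe_finset] at this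
  -- some coordinate is zero
  have hSne : S ≠ Finset.univ := by
    intro h
    have : (Finset.univ : Finset (Fin n)).card ≤ k := by rw [← h]; exact hScard
    simp at this; omega
  obtain ⟨j, hj⟩ : ∃ j, j ∉ S := by
    by_contra h
    push_neg at h
    exact hSne (Finset.eq_univ_of_forall h)
  have hxj : x j = 0 := by
    by_contra h
    exact hj (by simp [hS, h])
  -- infimum is 0
  have hbdd : BddBelow (Set.range fun i => 2 * x i) := (Set.finite_range _).bddBelow
  have hinf1 : (⨅ i, 2 * x i) ≤ 0 := by
    have := ciInf_le hbdd j
    simpa [hxj] using this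
  have : Nonempty (Fin n) := ⟨⟨0, by omega⟩⟩
  have hinf2 : 0 ≤ ⨅ i, 2 * x i := le_ciInf fun i => by have := hpos i; linarith
  have hinf : (⨅ i, 2 * x i) = 0 := le_antisymm hinf1 hinf2
  -- k ≥ 1
  have hk1 : 1 ≤ k := by
    by_contra h
    have hk0 : k = 0 := by omega
    have hSempty : S = ∅ := Finset.card_eq_zero.mp (by omega)
    have : ∑ i, x i = 0 := by
      apply Finset.sum_eq_zero
      intro i _
      by_contra hne
      have : i ∈ S := by simp [hS, hne]
      simp [hSempty] at this
    rw [hsum] at this; norm_num at this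
  -- Cauchy-Schwarz
  have hsumS : ∑ i ∈ S, x i = 1 := by
    rw [← hsum]
    apply Finset.sum_subset (Finset.subset_univ S)
    intro i _ hi
    by_contra hne
    exact hi (by simp [hS, hne])
  have hcs : (1 : ℝ) ≤ S.card * ∑ i ∈ S, x i ^ 2 := by
    have := sq_sum_le_card_mul_sum_sq (s := S) (f := x)
    rwa [hsumS, one_pow] at this
  have hsq : ∑ i ∈ S, x i ^ 2 = ∑ i, x i ^ 2 := by
    apply Finset.sum_subset (Finset.subset_univ S)
    intro i _ hi
    have : x i = 0 := by by_contra hne; exact hi (by simp [hS, hne])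
    simp [this]
  have hck : (S.card : ℝ) ≤ (k : ℝ) := by exact_mod_cast hScard
  have hk0 : (0 : ℝ) < k := by exact_mod_cast hk1
  have hsumq_pos : 0 ≤ ∑ i ∈ S, x i ^ 2 := Finset.sum_nonneg fun i _ => sq_nonneg _
  have hcs2 : (1 : ℝ) ≤ k * ∑ i, x i ^ 2 := by
    calc (1:ℝ) ≤ S.card * ∑ i ∈ S, x i ^ 2 := hcs
    _ ≤ k * ∑ i ∈ S, x i ^ 2 := by apply mul_le_mul_of_nonneg_right hck hsumq_pos
    _ = k * ∑ i, x i ^ 2 := by rw [hsq]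
  have hge : (1 : ℝ) / k ≤ ∑ i, x i ^ 2 := by
    rw [div_le_iff₀ hk0] at *
    linarith [hcs2]
  have heq : ∑ i, x i * (2 * x i) = 2 * ∑ i, x i ^ 2 := by
    rw [Finset.mul_sum]; apply Finset.sum_congr rfl; intro i _; ring
  rw [hinf, heq]
  rw [ge_iff_le, div_le_iff₀ hk0] at *
  nlinarith [hge]
end

section
/- For f(X) := ‖X‖_F² over the spectahedron S, the duality gap g(X) := X • ∇f(X) - λ_min(∇f(X)) satisfies g(X) ≥ 1/k for every X ∈ S with rank(X) ≤ k < n. -/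
/-! Since `rank X < n`, the positive semidefinite matrix `2X` has `0` as an eigenvalue, so the gap
is `2 tr(X²)`. The at most `k` nonzero eigenvalues of `X` sum to `tr X = 1`, so by Cauchy–Schwarz
their squares sum to at least `1/k`. -/

open Finset Matrix
open scoped ComplexOrder

theorem sq_sum_le_card_support_mul_sum_sq {ι α : Type*} [Fintype ι] [Field α] [LinearOrder α]
    [IsStrictOrderedRing α] (f : ι → α) :
    (∑ i, f i) ^ 2 ≤ #{i | f i ≠ 0} * ∑ i, f i ^ 2 := by
  have hsq : ∑ i with f i ≠ 0, f i ^ 2 = ∑ i, f i ^ 2 :=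
    sum_filter_of_ne fun i _ hi ↦ by simpa using hi
  rw [← sum_filter_ne_zero, ← hsq]
  exact sq_sum_le_card_mul_sum_sq

namespace Matrix

variable {𝕜 n : Type*} [RCLike 𝕜] [Fintype n] [DecidableEq n]

theorem IsHermitian.trace_mul_self_eq_sum_sq_eigenvalues {A : Matrix n n 𝕜} (hA : A.IsHermitian) :
    (A * A).trace = ∑ i, (hA.eigenvalues i : 𝕜) ^ 2 := by
  conv_lhs => rw [hA.spectral_theorem, ← map_mul, Unitary.conjStarAlgAut_apply, trace_mul_cycle,
    Unitary.coe_star_mul_self, one_mul, diagonal_mul_diagonal, trace_diagonal]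
  simp [sq]

theorem IsHermitian.sq_trace_le_rank_mul_trace_mul_self {A : Matrix n n ℝ} (hA : A.IsHermitian) :
    A.trace ^ 2 ≤ A.rank * (A * A).trace := by
  rw [hA.trace_eq_sum_eigenvalues, hA.trace_mul_self_eq_sum_sq_eigenvalues,
    hA.rank_eq_card_non_zero_eigs, Fintype.card_subtype]
  exact sq_sum_le_card_support_mul_sum_sq _

theorem PosSemidef.iInf_eigenvalues_eq_zero_of_rank_lt {A : Matrix n n 𝕜} (hA : A.PosSemidef)
    (hrank : A.rank < Fintype.card n) : ⨅ i, hA.isHermitian.eigenvalues i = 0 := by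
  obtain ⟨i, hi⟩ : ∃ i, hA.isHermitian.eigenvalues i = 0 := by
    by_contra! h
    rw [hA.isHermitian.rank_eq_card_non_zero_eigs, Fintype.card_subtype,
      filter_true_of_mem fun i _ ↦ h i] at hrank
    exact hrank.ne rfl
  exact IsLeast.csInf_eq ⟨⟨i, hi⟩, Set.forall_mem_range.2 hA.eigenvalues_nonneg⟩

end Matrix

/-- For `f(X) = ‖X‖_F²` over the spectahedron (`∇f(X) = 2X`), the duality gap
`g(X) = X • ∇f(X) - λ_min(∇f(X))` is at least `1/k` for every `X` in the
spectahedron with rank at most `k < n`. -/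
theorem duality_gap_lower_bound_low_rank_spectahedron
    (n k : ℕ) (hkn : k < n) (X : Matrix (Fin n) (Fin n) ℝ)
    (hX : X.PosSemidef) (htr : X.trace = 1) (hrank : X.rank ≤ k) :
    ((((2 : ℝ) • X).transpose * X).trace) -
      (⨅ i, (show ((2 : ℝ) • X).IsHermitian by
          unfold Matrix.IsHermitian at *
          rw [Matrix.conjTranspose_smul, hX.1]
          simp).eigenvalues i) ≥ 1 / (k : ℝ) := by
  have hminEig := (hX.smul (zero_le_two : (0 : ℝ) ≤ 2)).iInf_eigenvalues_eq_zero_of_rank_lt (by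
    rw [rank_smul_of_mem_nonZeroDivisors _ (mem_nonZeroDivisors_of_ne_zero two_ne_zero),
      Fintype.card_fin]
    omega)
  have hsym : Xᵀ = X := by rw [← conjTranspose_eq_transpose_of_trivial, hX.isHermitian.eq]
  have hsq := hX.isHermitian.sq_trace_le_rank_mul_trace_mul_self
  rw [htr, one_pow] at hsq
  have hnonneg : 0 ≤ (X * X).trace := by
    simpa [hsym] using (posSemidef_conjTranspose_mul_self X).trace_nonneg
  have hbound : 1 / (k : ℝ) ≤ (X * X).trace :=
    div_le_of_le_mul₀ k.cast_nonneg hnonneg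
      (hsq.trans (by rw [mul_comm]; gcongr))
  rw [hminEig, transpose_smul, hsym, smul_mul, trace_smul, smul_eq_mul]
  linarith
end

section
/- For any non-zero matrix Z ∈ ℝ^{m×n} and t ∈ ℝ, the nuclear norm satisfies ‖Z‖_nuc ≤ t/2 if and only if there exist symmetric matrices V ∈ S^{m×m}, W ∈ S^{n×n} such that the block matrix [[V, Z], [Zᵀ, W]] is positive semidefinite and tr(V) + tr(W) ≤ t. Moreover, the same equivalence holds with the trace constraint as equality tr(V) + tr(W) = t. -/
/-- The nuclear norm of `Z` (sum of the singular values of `Z`, i.e. the sum of the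
square roots of the eigenvalues of `Zᴴ Z`). -/
noncomputable def nuclearNorm {m n : ℕ} (Z : Matrix (Fin m) (Fin n) ℝ) : ℝ :=
  ∑ i, Real.sqrt ((Matrix.posSemidef_conjTranspose_mul_self Z).1.eigenvalues i)

/-!
Diagonalising `ZᴴZ` by an orthogonal `P` gives `Z = U S Pᴴ`, where `S = diag σ` carries the
singular values and `U` is a partial isometry (`U Uᴴ U = U`) with `Uᴴ U S = S`.

If `2 tr S ≤ t`, the block matrix `[[U S Uᴴ, Z], [Zᴴ, P S Pᴴ]] = [U; P] S [U; P]ᴴ` is positive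
semidefinite with both diagonal traces equal to `tr S`, and adding a multiple of the identity to
the first block raises the total trace to exactly `t`. Conversely, conjugating a positive
semidefinite block matrix `[[V, Z], [Zᴴ, W]]` by `[U; -P]` gives
`2 tr S ≤ tr (Uᴴ V U) + tr W ≤ tr V + tr W`, the last step because `U Uᴴ` is an orthogonal
projection.
-/

open Matrix

namespace Matrix

variable {m n : Type*} [Fintype m] [Fintype n]

lemma PosSemidef.trace_conjTranspose_mul_mul_le {R k : Type*} [CommRing R] [PartialOrder R]
    [StarRing R] [StarOrderedRing R] [Fintype k] [DecidableEq m] {V : Matrix m m R}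
    (hV : V.PosSemidef) {U : Matrix m k R} (hU : U * Uᴴ * U = U) :
    (Uᴴ * V * U).trace ≤ V.trace := by
  set C : Matrix m m R := 1 - U * Uᴴ
  have hC : C * Cᴴ = C := by
    simp only [C, conjTranspose_sub, conjTranspose_one, conjTranspose_mul,
      conjTranspose_conjTranspose, Matrix.sub_mul, Matrix.mul_sub, Matrix.one_mul,
      Matrix.mul_one, ← Matrix.mul_assoc, hU]
    abel
  have htrace : (Cᴴ * V * C).trace = V.trace - (Uᴴ * V * U).trace := by
    rw [trace_mul_cycle, hC, trace_mul_cycle, Matrix.sub_mul, Matrix.one_mul, trace_sub]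
  have hnonneg := (hV.conjTranspose_mul_mul_same C).trace_nonneg
  rw [htrace] at hnonneg
  exact sub_nonneg.mp hnonneg

variable [DecidableEq n]

-- With `0⁻¹ = 0`, `σ⁻¹ * σ` is the indicator of `σ ≠ 0`; the other columns of `Y` have norm `0`.
lemma mul_diagonal_inv_mul_self_of_conjTranspose_mul_self {Y : Matrix m n ℝ} {σ : n → ℝ}
    (hY : Yᴴ * Y = diagonal (σ ^ 2)) : Y * diagonal (σ⁻¹ * σ) = Y := by
  have hsplit : Y - Y * diagonal (σ⁻¹ * σ) = Y * diagonal (1 - σ⁻¹ * σ) := by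
    ext i j
    simp [mul_sub]
  have hgram : (Y * diagonal (1 - σ⁻¹ * σ))ᴴ * (Y * diagonal (1 - σ⁻¹ * σ)) = 0 := by
    rw [conjTranspose_mul, Matrix.mul_assoc, ← Matrix.mul_assoc Yᴴ, hY, diagonal_conjTranspose,
      diagonal_mul_diagonal, diagonal_mul_diagonal, ← diagonal_zero]
    congr 1
    ext i
    rcases eq_or_ne (σ i) 0 with h | h <;> simp [h]
  rw [conjTranspose_mul_self_eq_zero, ← hsplit, sub_eq_zero] at hgram
  exact hgram.symm

lemma exists_partialIsometry_mul_diagonal_eq {Y : Matrix m n ℝ} {σ : n → ℝ}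
    (hY : Yᴴ * Y = diagonal (σ ^ 2)) :
    ∃ U : Matrix m n ℝ,
      U * Uᴴ * U = U ∧ Uᴴ * U * diagonal σ = diagonal σ ∧ U * diagonal σ = Y := by
  have hgram : (Y * diagonal σ⁻¹)ᴴ * (Y * diagonal σ⁻¹) = diagonal (σ⁻¹ * σ) := by
    rw [conjTranspose_mul, Matrix.mul_assoc, ← Matrix.mul_assoc Yᴴ, hY, diagonal_conjTranspose,
      diagonal_mul_diagonal, diagonal_mul_diagonal]
    congr 1
    ext i
    rcases eq_or_ne (σ i) 0 with h | h <;> simp [h]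
    field_simp
  refine ⟨Y * diagonal σ⁻¹, ?_, ?_, ?_⟩
  · rw [Matrix.mul_assoc, hgram, Matrix.mul_assoc, diagonal_mul_diagonal]
    congr 2
    ext i
    rcases eq_or_ne (σ i) 0 with h | h <;> simp [h]
  · rw [hgram, diagonal_mul_diagonal]
    congr 1
    ext i
    exact inv_mul_mul_self (σ i)
  · rw [Matrix.mul_assoc, diagonal_mul_diagonal]
    exact mul_diagonal_inv_mul_self_of_conjTranspose_mul_self hY

noncomputable def singularValues (Z : Matrix m n ℝ) : n → ℝ :=
  fun i => √((posSemidef_conjTranspose_mul_self Z).1.eigenvalues i)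

lemma singularValues_nonneg (Z : Matrix m n ℝ) : 0 ≤ Z.singularValues :=
  fun _ => Real.sqrt_nonneg _

lemma conjTranspose_mul_self_mul_eigenvectorUnitary (Z : Matrix m n ℝ) :
    let P : Matrix n n ℝ := (posSemidef_conjTranspose_mul_self Z).1.eigenvectorUnitary
    (Z * P)ᴴ * (Z * P) = diagonal (Z.singularValues ^ 2) := by
  intro P
  have h := (posSemidef_conjTranspose_mul_self Z).1.conjStarAlgAut_star_eigenvectorUnitary
  simp only [Unitary.conjStarAlgAut_apply, Unitary.coe_star, star_star,
    RCLike.ofReal_real_eq_id, Function.id_comp] at h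
  rw [conjTranspose_mul, ← star_eq_conjTranspose, Matrix.mul_assoc, ← Matrix.mul_assoc Zᴴ,
    ← Matrix.mul_assoc]
  refine h.trans (congrArg diagonal (funext fun i => ?_))
  exact (Real.sq_sqrt ((posSemidef_conjTranspose_mul_self Z).eigenvalues_nonneg i)).symm

theorem exists_svd (Z : Matrix m n ℝ) :
    ∃ (U : Matrix m n ℝ) (P : Matrix n n ℝ), P ∈ unitaryGroup n ℝ ∧ U * Uᴴ * U = U ∧
      Uᴴ * U * diagonal Z.singularValues = diagonal Z.singularValues ∧
      Z = U * diagonal Z.singularValues * Pᴴ := by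
  let P : unitaryGroup n ℝ := (posSemidef_conjTranspose_mul_self Z).1.eigenvectorUnitary
  obtain ⟨U, hUU, hUσ, hZP⟩ :=
    exists_partialIsometry_mul_diagonal_eq (conjTranspose_mul_self_mul_eigenvectorUnitary Z)
  refine ⟨U, P, P.2, hUU, hUσ, ?_⟩
  rw [hZP, Matrix.mul_assoc, ← star_eq_conjTranspose, mem_unitaryGroup_iff.mp P.2,
    Matrix.mul_one]

theorem exists_posSemidef_fromBlocks_trace_eq_sum_singularValues (Z : Matrix m n ℝ) :
    ∃ (V : Matrix m m ℝ) (W : Matrix n n ℝ), (fromBlocks V Z Zᴴ W).PosSemidef ∧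
      V.trace = ∑ i, Z.singularValues i ∧ W.trace = ∑ i, Z.singularValues i := by
  obtain ⟨U, P, hP, -, hUσ, hZ⟩ := exists_svd Z
  set S := diagonal Z.singularValues
  have hS : S.PosSemidef := PosSemidef.diagonal Z.singularValues_nonneg
  have hZH : Zᴴ = P * S * Uᴴ := by
    rw [hZ, conjTranspose_mul, conjTranspose_mul, conjTranspose_conjTranspose, hS.1.eq,
      Matrix.mul_assoc]
  refine ⟨U * S * Uᴴ, P * S * Pᴴ, ?_, ?_, ?_⟩
  · have hblocks : fromBlocks (U * S * Uᴴ) Z Zᴴ (P * S * Pᴴ) =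
        fromRows U P * S * (fromRows U P)ᴴ := by
      rw [conjTranspose_fromRows_eq_fromCols_conjTranspose, fromRows_mul, fromRows_mul_fromCols,
        hZH, hZ]
    rw [hblocks]
    exact hS.mul_mul_conjTranspose_same _
  · rw [trace_mul_cycle, hUσ, trace_diagonal]
  · rw [trace_mul_cycle, ← star_eq_conjTranspose, mem_unitaryGroup_iff'.mp hP, Matrix.one_mul,
      trace_diagonal]

theorem exists_posSemidef_fromBlocks_trace_add_trace_eq [Nonempty m] (Z : Matrix m n ℝ) {t : ℝ}
    (ht : 2 * ∑ i, Z.singularValues i ≤ t) :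
    ∃ (V : Matrix m m ℝ) (W : Matrix n n ℝ), (fromBlocks V Z Zᴴ W).PosSemidef ∧
      V.trace + W.trace = t := by
  classical
  obtain ⟨V, W, hVW, hV, hW⟩ := exists_posSemidef_fromBlocks_trace_eq_sum_singularValues Z
  set c := (t - 2 * ∑ i, Z.singularValues i) / Fintype.card m
  have hc : 0 ≤ c := div_nonneg (by linarith) (Nat.cast_nonneg _)
  refine ⟨V + c • 1, W, ?_, ?_⟩
  · have hsplit : fromBlocks (V + c • 1) Z Zᴴ W =
        fromBlocks V Z Zᴴ W + diagonal (Sum.elim (fun _ => c) 0) := by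
      rw [← fromBlocks_diagonal, diagonal_zero', fromBlocks_add, smul_one_eq_diagonal,
        add_zero, add_zero, add_zero]
    rw [hsplit]
    exact hVW.add (PosSemidef.diagonal (by rintro (i | i) <;> simp [hc]))
  · rw [trace_add, trace_smul, trace_one, hV, hW, smul_eq_mul,
      div_mul_cancel₀ _ (Nat.cast_ne_zero.mpr Fintype.card_ne_zero)]
    ring

theorem two_mul_sum_singularValues_le_trace_add_trace {Z : Matrix m n ℝ} {V : Matrix m m ℝ}
    {W : Matrix n n ℝ} (h : (fromBlocks V Z Zᴴ W).PosSemidef) :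
    2 * ∑ i, Z.singularValues i ≤ V.trace + W.trace := by
  classical
  obtain ⟨U, P, hP, hUU, hUσ, hZ⟩ := exists_svd Z
  set S := diagonal Z.singularValues
  have hV : V.PosSemidef := h.submatrix Sum.inl
  have hUZP : (Uᴴ * Z * P).trace = S.trace := by
    rw [hZ, Matrix.mul_assoc, Matrix.mul_assoc, ← star_eq_conjTranspose,
      mem_unitaryGroup_iff'.mp hP, Matrix.mul_one, ← Matrix.mul_assoc, hUσ]
  have hPZU : (Pᴴ * Zᴴ * U).trace = S.trace := by
    rw [← hUZP, ← star_trivial (Uᴴ * Z * P).trace, ← trace_conjTranspose]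
    simp only [conjTranspose_mul, conjTranspose_conjTranspose, Matrix.mul_assoc]
  have hPWP : (Pᴴ * W * P).trace = W.trace := by
    rw [trace_mul_cycle, ← star_eq_conjTranspose, mem_unitaryGroup_iff.mp hP, Matrix.one_mul]
  have htest := (h.conjTranspose_mul_mul_same (fromRows U (-P))).trace_nonneg
  rw [conjTranspose_fromRows_eq_fromCols_conjTranspose, fromCols_mul_fromBlocks,
    fromCols_mul_fromRows] at htest
  simp only [Matrix.add_mul, trace_add, Matrix.neg_mul, Matrix.mul_neg, trace_neg,
    conjTranspose_neg] at htest
  have hS : S.trace = ∑ i, Z.singularValues i := trace_diagonal _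
  linarith [hV.trace_conjTranspose_mul_mul_le hUU]

end Matrix

lemma nuclearNorm_eq_sum_singularValues {m n : ℕ} (Z : Matrix (Fin m) (Fin n) ℝ) :
    nuclearNorm Z = ∑ i, Z.singularValues i :=
  rfl

/-- Semidefinite characterization of the nuclear norm: for a nonzero `Z ∈ ℝ^{m×n}`,
`‖Z‖_nuc ≤ t/2` iff there are symmetric `V, W` with `[[V, Z], [Zᵀ, W]] ⪰ 0` and
`tr V + tr W ≤ t`; moreover the same holds with equality `tr V + tr W = t`. -/
theorem nuclearNorm_le_iff_sdp
    {m n : ℕ} (Z : Matrix (Fin m) (Fin n) ℝ) (hZ : Z ≠ 0) (t : ℝ) :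
    (nuclearNorm Z ≤ t / 2 ↔
      ∃ V : Matrix (Fin m) (Fin m) ℝ, ∃ W : Matrix (Fin n) (Fin n) ℝ,
        V.IsSymm ∧ W.IsSymm ∧
        (Matrix.fromBlocks V Z Z.transpose W).PosSemidef ∧
        V.trace + W.trace ≤ t) ∧
    (nuclearNorm Z ≤ t / 2 ↔
      ∃ V : Matrix (Fin m) (Fin m) ℝ, ∃ W : Matrix (Fin n) (Fin n) ℝ,
        V.IsSymm ∧ W.IsSymm ∧
        (Matrix.fromBlocks V Z Z.transpose W).PosSemidef ∧
        V.trace + W.trace = t) := by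
  rw [← conjTranspose_eq_transpose_of_trivial, nuclearNorm_eq_sum_singularValues]
  have : Nonempty (Fin m) := by
    by_contra h
    exact hZ (ext fun i => (not_nonempty_iff.mp h).elim i)
  have hsdp (h : ∑ i, Z.singularValues i ≤ t / 2) : ∃ V W, V.IsSymm ∧ W.IsSymm ∧
      (fromBlocks V Z Zᴴ W).PosSemidef ∧ V.trace + W.trace = t := by
    obtain ⟨V, W, hVW, htr⟩ := exists_posSemidef_fromBlocks_trace_add_trace_eq Z (t := t)
      (by linarith)
    obtain ⟨hV, -, -, hW⟩ := isHermitian_fromBlocks_iff.mp hVW.1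
    exact ⟨V, W, isHermitian_iff_isSymm.mp hV, isHermitian_iff_isSymm.mp hW, hVW, htr⟩
  have hnuc (V : Matrix (Fin m) (Fin m) ℝ) (W : Matrix (Fin n) (Fin n) ℝ)
      (hVW : (fromBlocks V Z Zᴴ W).PosSemidef) (htr : V.trace + W.trace ≤ t) :
      ∑ i, Z.singularValues i ≤ t / 2 := by
    linarith [two_mul_sum_singularValues_le_trace_add_trace hVW]
  refine ⟨⟨fun h => ?_, fun ⟨V, W, _, _, hVW, htr⟩ => hnuc V W hVW htr⟩,
    ⟨hsdp, fun ⟨V, W, _, _, hVW, htr⟩ => hnuc V W hVW htr.le⟩⟩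
  obtain ⟨V, W, hV, hW, hVW, htr⟩ := hsdp h
  exact ⟨V, W, hV, hW, hVW, htr.le⟩
end

section
/- For any non-zero matrix Z ∈ ℝ^{m×n} and t ∈ ℝ, the max-norm satisfies ‖Z‖_max ≤ t if and only if there exist symmetric matrices V ∈ S^{m×m}, W ∈ S^{n×n} such that [[V, Z], [Zᵀ, W]] ⪰ 0, V_ii ≤ t for all i ∈ [m], and W_jj ≤ t for all j ∈ [n]. -/
/-- The max-norm of `Z`: the minimum over all factorizations `Z = L Rᵀ` (with any
number `k` of columns) of `max(‖L‖₂,∞², ‖R‖₂,∞²)`, where `‖L‖₂,∞` is the largest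
Euclidean norm of a row of `L`. -/
noncomputable def maxNorm {m n : ℕ} (Z : Matrix (Fin m) (Fin n) ℝ) : ℝ :=
  sInf {r : ℝ | ∃ k : ℕ, ∃ L : Matrix (Fin m) (Fin k) ℝ, ∃ R : Matrix (Fin n) (Fin k) ℝ,
    L * R.transpose = Z ∧
    r = max (⨆ i, ∑ j, (L i j) ^ 2) (⨆ i, ∑ j, (R i j) ^ 2)}

/-!
A factorization `Z = L Nᵀ` gives the Gram matrix `[L; N] [L; N]ᵀ = [[L Lᵀ, Z], [Zᵀ, N Nᵀ]] ⪰ 0`,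
whose diagonal lists the squared row norms of `L` and `N`. Conversely every positive semidefinite
matrix is a Gram matrix `C Cᵀ`, and splitting the rows of `C` gives a factorization of its
off-diagonal block. Hence `‖Z‖_max ≤ t` iff the semidefinite program is feasible at every level
`s > t`. Feasibility at `t` itself follows by compactness: `|M_ab| ≤ (M_aa + M_bb) / 2` bounds
the feasible matrices, so the nested nonempty compact feasible sets at levels `s > t` meet.
-/

open Matrix Set

namespace Matrix

section Topology

variable {ι R : Type*} [Fintype ι] [Ring R] [PartialOrder R] [StarRing R] [TopologicalSpace R]
  [IsTopologicalRing R] [T2Space R] [ContinuousStar R] [ClosedIciTopology R]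

theorem isClosed_setOf_posSemidef : IsClosed {M : Matrix ι ι R | M.PosSemidef} := by
  simp_rw [posSemidef_iff_dotProduct_mulVec, ofPred_and, ofPred_forall]
  refine (isClosed_eq (by fun_prop) continuous_id).inter (isClosed_iInter fun x => ?_)
  exact isClosed_Ici.preimage
    (continuous_const.dotProduct (continuous_id.matrix_mulVec continuous_const))

end Topology

theorem PosSemidef.abs_apply_le {ι R : Type*} [Fintype ι] [Field R] [LinearOrder R]
    [IsStrictOrderedRing R] [StarRing R] [TrivialStar R] {M : Matrix ι ι R} (hM : M.PosSemidef)
    (a b : ι) : |M a b| ≤ (M a a + M b b) / 2 := by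
  classical
  have hsymm : M b a = M a b := by simpa using hM.1.apply a b
  have hplus := hM.dotProduct_mulVec_nonneg (Pi.single a 1 + Pi.single b 1)
  have hminus := hM.dotProduct_mulVec_nonneg (Pi.single a 1 - Pi.single b 1)
  simp only [star_trivial, mulVec_add, mulVec_sub, mulVec_single_one, add_dotProduct,
    sub_dotProduct, single_dotProduct, dotProduct_add, dotProduct_sub, one_mul,
    col_apply] at hplus hminus
  rw [abs_le]
  constructor <;> linarith

section Order

open scoped ComplexOrder MatrixOrder

theorem PosSemidef.exists_eq_mul_conjTranspose {ι 𝕜 : Type*} [Fintype ι] [RCLike 𝕜]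
    {M : Matrix ι ι 𝕜} (hM : M.PosSemidef) : ∃ C : Matrix ι ι 𝕜, M = C * Cᴴ := by
  classical
  obtain ⟨B, rfl⟩ := CStarAlgebra.nonneg_iff_eq_star_mul_self.mp hM.nonneg
  exact ⟨Bᴴ, by rw [conjTranspose_conjTranspose]; rfl⟩

end Order

theorem fromRows_mul_transpose_fromRows {ι κ γ R : Type*} [Fintype γ] [CommRing R]
    (L : Matrix ι γ R) (N : Matrix κ γ R) :
    fromRows L N * (fromRows L N)ᵀ = fromBlocks (L * Lᵀ) (L * Nᵀ) (N * Lᵀ) (N * Nᵀ) := by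
  rw [transpose_fromRows, fromRows_mul_fromCols]

theorem mul_transpose_self_apply_self {ι γ R : Type*} [Fintype γ] [CommRing R]
    (L : Matrix ι γ R) (i : ι) : (L * Lᵀ) i i = ∑ j, L i j ^ 2 := by
  simp only [mul_apply, transpose_apply, sq]

end Matrix

section Certificates

variable {ι κ : Type*}

def sdpFeasibleSet [Fintype ι] [Fintype κ] (Z : Matrix ι κ ℝ) (t : ℝ) :
    Set (Matrix (ι ⊕ κ) (ι ⊕ κ) ℝ) :=
  {M | M.PosSemidef ∧ M.toBlocks₁₂ = Z ∧ ∀ a, M a a ≤ t}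

variable [Fintype ι] [Fintype κ] {Z : Matrix ι κ ℝ}

theorem sdpFeasibleSet_mono : Monotone (sdpFeasibleSet Z) :=
  fun _ _ hst _ ⟨hpsd, hZ, hdiag⟩ => ⟨hpsd, hZ, fun a => (hdiag a).trans hst⟩

theorem isClosed_sdpFeasibleSet (t : ℝ) : IsClosed (sdpFeasibleSet Z t) := by
  refine isClosed_setOf_posSemidef.inter ((isClosed_eq ?_ continuous_const).inter ?_)
  · exact continuous_pi fun i => continuous_pi fun j => continuous_apply_apply _ _
  · exact isClosed_le (f := diag) (g := fun _ _ => t)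
      (continuous_pi fun a => continuous_apply_apply a a) continuous_const

theorem sdpFeasibleSet_subset_pi_Icc (t : ℝ) :
    sdpFeasibleSet Z t ⊆ univ.pi fun _ => univ.pi fun _ => Icc (-t) t := by
  rintro M ⟨hpsd, -, hdiag⟩ a - b -
  have := hpsd.abs_apply_le a b
  exact abs_le.mp (this.trans (by linarith [hdiag a, hdiag b]))

theorem isCompact_sdpFeasibleSet (t : ℝ) : IsCompact (sdpFeasibleSet Z t) :=
  (isCompact_univ_pi fun _ => isCompact_univ_pi fun _ => isCompact_Icc).of_isClosed_subset
    (isClosed_sdpFeasibleSet t) (sdpFeasibleSet_subset_pi_Icc t)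

theorem iInter_sdpFeasibleSet_Ioi (t : ℝ) :
    ⋂ s : Ioi t, sdpFeasibleSet Z s = sdpFeasibleSet Z t := by
  refine Subset.antisymm (fun M hM => ?_) (subset_iInter fun s => sdpFeasibleSet_mono s.2.le)
  have hM' : ∀ s, t < s → M ∈ sdpFeasibleSet Z s := fun s hs => mem_iInter.1 hM ⟨s, hs⟩
  obtain ⟨hpsd, hZ, -⟩ := hM' (t + 1) (by linarith)
  exact ⟨hpsd, hZ, fun a => le_of_forall_gt_imp_ge_of_dense fun s hs => (hM' s hs).2.2 a⟩

theorem sdpFeasibleSet_nonempty_of_forall_lt {t : ℝ}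
    (h : ∀ s, t < s → (sdpFeasibleSet Z s).Nonempty) : (sdpFeasibleSet Z t).Nonempty := by
  have : Nonempty (Ioi t) := ⟨⟨t + 1, by simp⟩⟩
  rw [← iInter_sdpFeasibleSet_Ioi]
  exact IsCompact.nonempty_iInter_of_directed_nonempty_isCompact_isClosed _
    (sdpFeasibleSet_mono.comp (Subtype.mono_coe _)).directed_ge (fun s => h s s.2)
    (fun s => isCompact_sdpFeasibleSet s) (fun s => isClosed_sdpFeasibleSet s)

theorem fromRows_mul_transpose_mem_sdpFeasibleSet {γ : Type*} [Fintype γ] (L : Matrix ι γ ℝ)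
    (N : Matrix κ γ ℝ) : fromRows L N * (fromRows L N)ᵀ ∈
      sdpFeasibleSet (L * Nᵀ) (max (⨆ i, ∑ j, L i j ^ 2) (⨆ i, ∑ j, N i j ^ 2)) := by
  refine ⟨by simpa using posSemidef_self_mul_conjTranspose (fromRows L N), ?_, ?_⟩
  · rw [fromRows_mul_transpose_fromRows, toBlocks_fromBlocks₁₂]
  · rintro (i | i) <;> rw [fromRows_mul_transpose_fromRows]
    · rw [fromBlocks_apply₁₁, mul_transpose_self_apply_self]
      exact le_max_of_le_left (le_ciSup (Finite.bddAbove_range fun i => ∑ j, L i j ^ 2) i)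
    · rw [fromBlocks_apply₂₂, mul_transpose_self_apply_self]
      exact le_max_of_le_right (le_ciSup (Finite.bddAbove_range fun i => ∑ j, N i j ^ 2) i)

theorem exists_mul_transpose_eq_of_mem_sdpFeasibleSet {M : Matrix (ι ⊕ κ) (ι ⊕ κ) ℝ} {t : ℝ}
    (hM : M ∈ sdpFeasibleSet Z t) : ∃ (L : Matrix ι (ι ⊕ κ) ℝ) (N : Matrix κ (ι ⊕ κ) ℝ),
      L * Nᵀ = Z ∧ (∀ i, ∑ j, L i j ^ 2 ≤ t) ∧ ∀ i, ∑ j, N i j ^ 2 ≤ t := by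
  obtain ⟨C, rfl⟩ := hM.1.exists_eq_mul_conjTranspose
  rw [conjTranspose_eq_transpose_of_trivial, ← fromRows_toRows C,
    fromRows_mul_transpose_fromRows] at hM
  obtain ⟨-, hZ, hdiag⟩ := hM
  refine ⟨C.toRows₁, C.toRows₂, hZ, fun i => ?_, fun i => ?_⟩
  · simpa [mul_transpose_self_apply_self] using hdiag (Sum.inl i)
  · simpa [mul_transpose_self_apply_self] using hdiag (Sum.inr i)

theorem sdpFeasibleSet_nonempty_iff {t : ℝ} : (sdpFeasibleSet Z t).Nonempty ↔
    ∃ V : Matrix ι ι ℝ, ∃ W : Matrix κ κ ℝ, V.IsSymm ∧ W.IsSymm ∧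
      (fromBlocks V Z Zᵀ W).PosSemidef ∧ (∀ i, V i i ≤ t) ∧ ∀ j, W j j ≤ t := by
  constructor
  · rintro ⟨M, hpsd, hZ, hdiag⟩
    rw [← fromBlocks_toBlocks M, hZ] at hpsd hdiag
    obtain ⟨hV, hZ', -, hW⟩ := isHermitian_fromBlocks_iff.mp hpsd.1
    rw [← hZ', conjTranspose_eq_transpose_of_trivial] at hpsd
    exact ⟨_, _, isHermitian_iff_isSymm.mp hV, isHermitian_iff_isSymm.mp hW, hpsd,
      fun i => hdiag (Sum.inl i), fun j => hdiag (Sum.inr j)⟩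
  · rintro ⟨V, W, -, -, hpsd, hV, hW⟩
    exact ⟨_, hpsd, toBlocks_fromBlocks₁₂ .., Sum.rec hV hW⟩

end Certificates

section MaxNorm

variable {m n : ℕ} {Z : Matrix (Fin m) (Fin n) ℝ} {t : ℝ}

theorem maxNorm_le_of_mul_transpose_eq {γ : Type*} [Fintype γ] (L : Matrix (Fin m) γ ℝ)
    (N : Matrix (Fin n) γ ℝ) (h : L * Nᵀ = Z) :
    maxNorm Z ≤ max (⨆ i, ∑ j, L i j ^ 2) (⨆ i, ∑ j, N i j ^ 2) := by
  let e := Fintype.equivFin γ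
  refine csInf_le ⟨0, ?_⟩ ⟨Fintype.card γ, L.submatrix id e.symm, N.submatrix id e.symm, ?_, ?_⟩
  · rintro r ⟨k, L', N', -, rfl⟩
    exact le_max_of_le_left (Real.iSup_nonneg fun i => by positivity)
  · rw [transpose_submatrix, submatrix_mul_equiv, submatrix_id_id, h]
  · simp only [submatrix_apply, id, Equiv.sum_comp e.symm fun j => _ ^ 2]

theorem maxNorm_le_of_mem_sdpFeasibleSet [Nonempty (Fin m)] [Nonempty (Fin n)]
    {M : Matrix (Fin m ⊕ Fin n) (Fin m ⊕ Fin n) ℝ} (hM : M ∈ sdpFeasibleSet Z t) :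
    maxNorm Z ≤ t := by
  obtain ⟨L, N, hLN, hL, hN⟩ := exists_mul_transpose_eq_of_mem_sdpFeasibleSet hM
  exact (maxNorm_le_of_mul_transpose_eq L N hLN).trans (max_le (ciSup_le hL) (ciSup_le hN))

theorem sdpFeasibleSet_nonempty_of_maxNorm_lt (h : maxNorm Z < t) :
    (sdpFeasibleSet Z t).Nonempty := by
  rw [maxNorm] at h
  obtain ⟨r, ⟨k, L, N, rfl, rfl⟩, hr⟩ :=
    exists_lt_of_csInf_lt (by exact ⟨_, n, Z, 1, by simp, rfl⟩) h
  exact ⟨_, sdpFeasibleSet_mono hr.le (fromRows_mul_transpose_mem_sdpFeasibleSet L N)⟩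

end MaxNorm

/-- Semidefinite characterization of the max-norm: for a nonzero `Z ∈ ℝ^{m×n}`,
`‖Z‖_max ≤ t` iff there are symmetric `V, W` with `[[V, Z], [Zᵀ, W]] ⪰ 0`,
`V_ii ≤ t` for all `i`, and `W_jj ≤ t` for all `j`. -/
theorem maxNorm_le_iff_sdp
    {m n : ℕ} (Z : Matrix (Fin m) (Fin n) ℝ) (hZ : Z ≠ 0) (t : ℝ) :
    maxNorm Z ≤ t ↔
      ∃ V : Matrix (Fin m) (Fin m) ℝ, ∃ W : Matrix (Fin n) (Fin n) ℝ,
        V.IsSymm ∧ W.IsSymm ∧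
        (Matrix.fromBlocks V Z Z.transpose W).PosSemidef ∧
        (∀ i, V i i ≤ t) ∧ (∀ j, W j j ≤ t) := by
  obtain ⟨i, j, -⟩ : ∃ i j, Z i j ≠ 0 := by simpa [← Matrix.ext_iff] using hZ
  have : Nonempty (Fin m) := ⟨i⟩
  have : Nonempty (Fin n) := ⟨j⟩
  rw [← sdpFeasibleSet_nonempty_iff]
  exact ⟨fun h => sdpFeasibleSet_nonempty_of_forall_lt fun s hs =>
      sdpFeasibleSet_nonempty_of_maxNorm_lt (h.trans_lt hs),
    fun ⟨_, hM⟩ => maxNorm_le_of_mem_sdpFeasibleSet hM⟩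
end
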